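/- arXiv:1801.02509 — 7 statements merged into one kernel-verified Lean document; each statement's English description precedes it below -/
import Mathlib

section
/- Let θ₀ = 1 and θ_{k+1} ∈ (0,1] be defined by θ_{k+1}² = θ_k²(1 − θ_{k+1}) for k ≥ 0, and let t_k = 1/L for a constant L > 0. Then for all k ≥ 1, ∑_{i=0}^{k−1} t_i/θ_i = (1 − θ_k) ∑_{i=0}^{k} t_i/θ_i = 1/(L θ_{k−1}²) ≥ (k+1)²/(4L). -/
/-!
In terms of `u k = 1 / θ k` the recurrence reads `u (k+1)^2 - u (k+1) = u k ^ 2`, so the partial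
sums of `u` telescope to `u k ^ 2`. Completing the square, `(u (k+1) - 1/2)^2 = u k ^ 2 + 1/4`,
gives `u (k+1) ≥ u k + 1/2`, hence `u k ≥ (k+2)/2`.
-/

open Finset

namespace Fista

lemma inv_sq_sub_inv_eq {a b : ℝ} (ha : a ≠ 0) (hb : b ≠ 0) (h : b ^ 2 = a ^ 2 * (1 - b)) :
    b⁻¹ ^ 2 - b⁻¹ = a⁻¹ ^ 2 := by
  field_simp
  linear_combination -h

lemma inv_add_half_le {a b : ℝ} (ha : 0 < a) (hb : 0 < b) (h : b ^ 2 = a ^ 2 * (1 - b)) :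
    a⁻¹ + 1 / 2 ≤ b⁻¹ := by
  have hstep := inv_sq_sub_inv_eq ha.ne' hb.ne' h
  have hsq : (b⁻¹ - 1 / 2) ^ 2 = a⁻¹ ^ 2 + 1 / 4 := by linear_combination hstep
  have hb_inv : 1 < b⁻¹ := by nlinarith [inv_pos.2 ha, inv_pos.2 hb]
  nlinarith [inv_pos.2 ha]

variable {θ : ℕ → ℝ}

lemma pos_of_pos_succ (h0 : θ 0 = 1) (hpos : ∀ k, 0 < θ (k + 1)) (k : ℕ) : 0 < θ k := by
  cases k with
  | zero => simp [h0]
  | succ k => exact hpos k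

lemma sum_range_succ_inv (h0 : θ 0 = 1) (hpos : ∀ k, 0 < θ k)
    (hrec : ∀ k, θ (k + 1) ^ 2 = θ k ^ 2 * (1 - θ (k + 1))) (k : ℕ) :
    ∑ i ∈ range (k + 1), (θ i)⁻¹ = (θ k)⁻¹ ^ 2 := by
  induction k with
  | zero => simp [h0]
  | succ k ih =>
    rw [sum_range_succ, ih, ← inv_sq_sub_inv_eq (hpos k).ne' (hpos (k + 1)).ne' (hrec k)]
    ring

lemma half_add_two_le_inv (h0 : θ 0 = 1) (hpos : ∀ k, 0 < θ k)
    (hrec : ∀ k, θ (k + 1) ^ 2 = θ k ^ 2 * (1 - θ (k + 1))) (k : ℕ) :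
    ((k : ℝ) + 2) / 2 ≤ (θ k)⁻¹ := by
  induction k with
  | zero => simp [h0]
  | succ k ih =>
    have := inv_add_half_le (hpos k) (hpos (k + 1)) (hrec k)
    push_cast
    linarith

end Fista

open Fista in
/-- The FISTA parameter sequence with constant step `1/L` satisfies
`∑_{i<k} t_i/θ_i = (1-θ_k) ∑_{i<k+1} t_i/θ_i = 1/(L θ_{k-1}²) ≥ (k+1)²/(4L)`. -/
theorem fista_theta_sums (θ : ℕ → ℝ) (L : ℝ) (hL : 0 < L)
    (hθ0 : θ 0 = 1) (hθmem : ∀ k, θ (k+1) ∈ Set.Ioc (0:ℝ) 1)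
    (hθrec : ∀ k, (θ (k+1))^2 = (θ k)^2 * (1 - θ (k+1))) :
    ∀ k : ℕ, 1 ≤ k →
      (∑ i ∈ Finset.range k, (1/L) / θ i) =
          (1 - θ k) * ∑ i ∈ Finset.range (k+1), (1/L) / θ i ∧
      (∑ i ∈ Finset.range k, (1/L) / θ i) = 1 / (L * (θ (k-1))^2) ∧
      ((k:ℝ) + 1)^2 / (4*L) ≤ 1 / (L * (θ (k-1))^2) := by
  have hpos := pos_of_pos_succ hθ0 fun k ↦ (hθmem k).1
  have hsum : ∀ n, ∑ i ∈ range (n + 1), (1 / L) / θ i = 1 / (L * θ n ^ 2) := fun n ↦ by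
    simp_rw [div_eq_mul_inv (1 / L), ← mul_sum, sum_range_succ_inv hθ0 hpos hθrec]
    field_simp
  intro k hk
  obtain ⟨m, rfl⟩ := Nat.exists_eq_add_of_le' hk
  simp only [Nat.add_sub_cancel]
  refine ⟨?_, hsum m, ?_⟩
  · rw [hsum, hsum]
    field_simp [(hpos m).ne', (hpos (m + 1)).ne']
    linear_combination hθrec m
  · have hbound := pow_le_pow_left₀ (by positivity) (half_add_two_le_inv hθ0 hpos hθrec m) 2
    rw [one_div, mul_inv, ← inv_pow, inv_mul_eq_div]
    calc ((m + 1 : ℕ) + 1 : ℝ) ^ 2 / (4 * L) = (((m : ℝ) + 2) / 2) ^ 2 / L := by push_cast; ring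
      _ ≤ (θ m)⁻¹ ^ 2 / L := by gcongr
end

section
/- The FISTA parameter sequence defined by θ₀ = 1 and θ_{k+1}² = θ_k²(1 − θ_{k+1}) with θ_{k+1} ∈ (0,1] satisfies θ_k ≤ 2/(k+2) for all k ≥ 0. -/
/-- The FISTA parameter sequence satisfies `θ_k ≤ 2/(k+2)`. -/
theorem fista_theta_le (θ : ℕ → ℝ) (hθ0 : θ 0 = 1)
    (hθmem : ∀ k, θ (k+1) ∈ Set.Ioc (0:ℝ) 1)
    (hθrec : ∀ k, (θ (k+1))^2 = (θ k)^2 * (1 - θ (k+1))) :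
    ∀ k : ℕ, θ k ≤ 2 / ((k:ℝ) + 2) := by
  have hpos : ∀ k, 0 < θ k := by
    intro k
    cases k with
    | zero => rw [hθ0]; norm_num
    | succ n => exact (hθmem n).1
  have key : ∀ k : ℕ, ((k:ℝ) + 2) / 2 ≤ 1 / θ k := by
    intro k
    induction k with
    | zero => simp [hθ0]
    | succ n ih =>
      have h1 := hpos n
      have h2 := hpos (n+1)
      have hr := hθrec n
      have hle : θ (n+1) ≤ θ n := by
        nlinarith [sq_nonneg (θ (n+1)), sq_nonneg (θ n)]
      have step : 1 / θ n + 1/2 ≤ 1 / θ (n+1) := by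
        rw [div_add_div _ _ (ne_of_gt h1) (by norm_num), div_le_div_iff₀ (by positivity) h2]
        nlinarith
      push_cast
      calc ((n:ℝ) + 1 + 2) / 2 = ((n:ℝ) + 2) / 2 + 1/2 := by ring
        _ ≤ 1 / θ n + 1/2 := by linarith
        _ ≤ 1 / θ (n+1) := step
  intro k
  have h := key k
  have hp := hpos k
  rw [div_le_div_iff₀ (by positivity) (by positivity)] at h
  rw [le_div_iff₀ (by positivity)]
  nlinarith
end

section
/- Let φ : ℝⁿ → ℝ be differentiable convex, ψ : ℝⁿ → ℝ ∪ {∞} closed convex, f = φ + ψ. Suppose x₁ = Prox_{t₀}(x₀ − t₀∇φ(x₀)) with t₀ > 0 satisfies the decrease condition f(x₁) ≤ φ(x₀) + ψ(x₁) + ⟨g₀^ψ, x₀ − x₁⟩ − (t₀/2)‖g₀‖², where g₀ = ∇φ(x₀) + g₀^ψ, g₀^ψ ∈ ∂ψ(x₁), and x₁ = x₀ − t₀ g₀. Then f(x₁) ≤ −f*(g₀) + ⟨g₀, x₀⟩ − (t₀/2)‖g₀‖². -/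
open scoped RealInnerProductSpace

variable {E : Type*} [NormedAddCommGroup E] [InnerProductSpace ℝ E] [FiniteDimensional ℝ E]

/-- Convex conjugate of an extended-real-valued function. -/
noncomputable def conjFn (f : E → EReal) (z : E) : EReal :=
  ⨆ x : E, (((⟪z, x⟫ : ℝ) : EReal) - f x)

/-- Subdifferential of an extended-real-valued function. -/
def SubgradAt (f : E → EReal) (x : E) : Set E :=
  {g : E | ∀ y : E, f x + (((⟪g, y - x⟫ : ℝ)) : EReal) ≤ f y}

/-- Subdifferential of a real-valued function. -/
def RSubgradAt (f : E → ℝ) (x : E) : Set E :=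
  {g : E | ∀ y : E, f x + ⟪g, y - x⟫ ≤ f y}

/-- Convexity for extended-real-valued functions. -/
def EConvex (f : E → EReal) : Prop :=
  ∀ x y : E, ∀ a b : ℝ, 0 ≤ a → 0 ≤ b → a + b = 1 →
    f (a • x + b • y) ≤ ((a : ℝ) : EReal) * f x + ((b : ℝ) : EReal) * f y

/-- Properness of an extended-real-valued function. -/
def ProperFn (f : E → EReal) : Prop := (∃ x, f x ≠ ⊤) ∧ ∀ x, f x ≠ ⊥

/-- `p` is the proximal point `Prox_t(v)` of `ψ`, i.e. a minimizer of
`y ↦ ψ(y) + ‖y - v‖²/(2t)`. -/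
def IsProxPt (ψ : E → EReal) (t : ℝ) (v p : E) : Prop :=
  ∀ y : E, ψ p + ((‖p - v‖^2 / (2*t) : ℝ) : EReal) ≤ ψ y + ((‖y - v‖^2 / (2*t) : ℝ) : EReal)

/-! The gradient inequality makes `∇φ(x₀)` a subgradient of `φ` at `x₀`, so by the Fenchel–Young
equality `φ*(∇φ(x₀)) = ⟪∇φ(x₀), x₀⟫ - φ(x₀)`, and likewise `ψ*(g₀ψ) = ⟪g₀ψ, x₁⟫ - ψ(x₁)`.
Subadditivity of the conjugate of a sum bounds `f*(g₀) = (φ + ψ)*(∇φ(x₀) + g₀ψ)` by the sum of these,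
and the decrease condition turns this bound into the claim. The extended-real identities used hold
for every value of `ψ(x₁)`, so the cases `ψ(x₁) = ±∞` need no separate treatment. -/

theorem ConvexOn.add_le_of_hasFDerivAt {F : Type*} [NormedAddCommGroup F] [NormedSpace ℝ F]
    {s : Set F} {f : F → ℝ} {f' : F →L[ℝ] ℝ} {x y : F} (hf : ConvexOn ℝ s f) (hx : x ∈ s)
    (hy : y ∈ s) (hf' : HasFDerivAt f f' x) : f x + f' (y - x) ≤ f y := by
  set line := AffineMap.lineMap (k := ℝ) x y
  have hderiv : HasDerivAt (f ∘ line) (f' (y - x)) 0 := by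
    rw [← AffineMap.lineMap_apply_zero (k := ℝ) x y] at hf'
    exact hf'.comp_hasDerivAt 0 AffineMap.hasDerivAt_lineMap
  have hslope := (hf.comp_affineMap line).le_slope_of_hasDerivAt (by simpa [line] using hx)
    (by simpa [line] using hy) one_pos hderiv
  simp only [slope_def_field, Function.comp_apply, AffineMap.lineMap_apply_one,
    AffineMap.lineMap_apply_zero, sub_zero, div_one, line] at hslope
  linarith

theorem ConvexOn.mem_rSubgradAt_of_hasGradientAt {F : Type*} [NormedAddCommGroup F]
    [InnerProductSpace ℝ F] [CompleteSpace F] {f : F → ℝ} {g x : F}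
    (hf : ConvexOn ℝ Set.univ f) (hg : HasGradientAt f g x) : g ∈ RSubgradAt f x := fun _ =>
  hf.add_le_of_hasFDerivAt trivial trivial (hasGradientAt_iff_hasFDerivAt.mp hg)

theorem EReal.coe_sub_add_coe (a c : ℝ) (b : EReal) :
    (a : EReal) - (b + c) = ((a - c : ℝ) : EReal) - b := by
  induction b using EReal.rec with
  | bot => simp [-EReal.coe_sub]
  | top => simp
  | coe b => norm_cast; ring

theorem EReal.coe_add_sub_coe_add (a b c : ℝ) (d : EReal) :
    ((a + b : ℝ) : EReal) - (c + d) = ((a - c : ℝ) : EReal) + (b - d) := by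
  induction d using EReal.rec with
  | bot => simp [-EReal.coe_sub]
  | top => simp
  | coe d => norm_cast; ring

theorem EReal.neg_coe_add_coe_sub_add_coe (a b c : ℝ) (d : EReal) :
    -((a : EReal) + (b - d)) + c = ((c - a - b : ℝ) : EReal) + d := by
  induction d using EReal.rec with
  | bot => simp
  | top => simp [-EReal.coe_sub]
  | coe d => norm_cast; ring

section

variable {F : Type*} [NormedAddCommGroup F] [InnerProductSpace ℝ F]

theorem coe_mem_subgradAt {φ : F → ℝ} {g x : F} (h : g ∈ RSubgradAt φ x) :
    g ∈ SubgradAt (fun y => (φ y : EReal)) x := fun y => by dsimp only; exact_mod_cast h y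

theorem conjFn_eq_of_mem_subgradAt {ψ : F → EReal} {g x : F} (h : g ∈ SubgradAt ψ x) :
    conjFn ψ g = ((⟪g, x⟫ : ℝ) : EReal) - ψ x := by
  refine le_antisymm (iSup_le fun y => ?_) (le_iSup (fun y => ((⟪g, y⟫ : ℝ) : EReal) - ψ y) x)
  calc ((⟪g, y⟫ : ℝ) : EReal) - ψ y ≤ ((⟪g, y⟫ : ℝ) : EReal) - (ψ x + ((⟪g, y - x⟫ : ℝ) : EReal)) :=
        EReal.sub_le_sub le_rfl (h y)
    _ = ((⟪g, x⟫ : ℝ) : EReal) - ψ x := by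
        rw [EReal.coe_sub_add_coe, inner_sub_right, sub_sub_cancel]

theorem conjFn_add_le (φ : F → ℝ) (ψ : F → EReal) (g h : F) :
    conjFn (fun x => (φ x : EReal) + ψ x) (g + h) ≤ conjFn (fun x => (φ x : EReal)) g + conjFn ψ h :=
  iSup_le fun x => by
    rw [inner_add_left, EReal.coe_add_sub_coe_add]
    exact add_le_add (le_iSup (fun y => ((⟪g, y⟫ : ℝ) : EReal) - φ y) x)
      (le_iSup (fun y => ((⟪h, y⟫ : ℝ) : EReal) - ψ y) x)

end

theorem first_step_bound_general (φ : E → ℝ) (φ' : E → E)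
    (hφd : ∀ v, HasGradientAt φ (φ' v) v) (hφc : ConvexOn ℝ Set.univ φ)
    (ψ : E → EReal)
    (f : E → EReal) (hf : ∀ v, f v = ((φ v : ℝ) : EReal) + ψ v)
    (t₀ : ℝ) (x₀ x₁ g₀ g₀ψ : E)
    (hg₀ψ : g₀ψ ∈ SubgradAt ψ x₁) (hg₀ : g₀ = φ' x₀ + g₀ψ)
    (hdec : f x₁ ≤ ((φ x₀ + ⟪g₀ψ, x₀ - x₁⟫ - t₀/2 * ‖g₀‖^2 : ℝ) : EReal) + ψ x₁) :
    f x₁ ≤ -(conjFn f g₀) + ((⟪g₀, x₀⟫ - t₀/2 * ‖g₀‖^2 : ℝ) : EReal) := by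
  have hconj : conjFn f g₀ ≤
      ((⟪φ' x₀, x₀⟫ - φ x₀ : ℝ) : EReal) + (((⟪g₀ψ, x₁⟫ : ℝ) : EReal) - ψ x₁) := by
    have hφ := conjFn_eq_of_mem_subgradAt
      (coe_mem_subgradAt (hφc.mem_rSubgradAt_of_hasGradientAt (hφd x₀)))
    rw [← EReal.coe_sub] at hφ
    rw [funext hf, hg₀, ← hφ, ← conjFn_eq_of_mem_subgradAt hg₀ψ]
    exact conjFn_add_le φ ψ _ _
  calc f x₁ ≤ ((φ x₀ + ⟪g₀ψ, x₀ - x₁⟫ - t₀/2 * ‖g₀‖^2 : ℝ) : EReal) + ψ x₁ := hdec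
    _ = -(((⟪φ' x₀, x₀⟫ - φ x₀ : ℝ) : EReal) + (((⟪g₀ψ, x₁⟫ : ℝ) : EReal) - ψ x₁)) +
          ((⟪g₀, x₀⟫ - t₀/2 * ‖g₀‖^2 : ℝ) : EReal) := by
        rw [EReal.neg_coe_add_coe_sub_add_coe, hg₀, inner_add_left, inner_sub_right]
        congr 2
        ring
    _ ≤ -(conjFn f g₀) + ((⟪g₀, x₀⟫ - t₀/2 * ‖g₀‖^2 : ℝ) : EReal) :=
        add_le_add_left (EReal.neg_le_neg_iff.mpr hconj) _

/-- The first-step bound `f(x₁) ≤ -f*(g₀) + ⟪g₀, x₀⟫ - (t₀/2)‖g₀‖²`. -/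
theorem first_step_bound (φ : E → ℝ) (φ' : E → E)
    (hφd : ∀ v, HasGradientAt φ (φ' v) v) (hφc : ConvexOn ℝ Set.univ φ)
    (ψ : E → EReal) (hψc : EConvex ψ) (hψlsc : LowerSemicontinuous ψ)
    (f : E → EReal) (hf : ∀ v, f v = ((φ v : ℝ) : EReal) + ψ v)
    (t₀ : ℝ) (ht₀ : 0 < t₀) (x₀ x₁ g₀ g₀ψ : E)
    (hprox : IsProxPt ψ t₀ (x₀ - t₀ • φ' x₀) x₁)
    (hg₀ψ : g₀ψ ∈ SubgradAt ψ x₁) (hg₀ : g₀ = φ' x₀ + g₀ψ)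
    (hx₁ : x₁ = x₀ - t₀ • g₀)
    (hdec : f x₁ ≤ ((φ x₀ + ⟪g₀ψ, x₀ - x₁⟫ - t₀/2 * ‖g₀‖^2 : ℝ) : EReal) + ψ x₁) :
    f x₁ ≤ -(conjFn f g₀) + ((⟪g₀, x₀⟫ - t₀/2 * ‖g₀‖^2 : ℝ) : EReal) :=
  first_step_bound_general φ φ' hφd hφc ψ f hf t₀ x₀ x₁ g₀ g₀ψ hg₀ψ hg₀ hdec
end

section
/- Proximal gradient method O(1/k) rate: Let φ : ℝⁿ → ℝ be convex differentiable with L-Lipschitz gradient, ψ : ℝⁿ → ℝ ∪ {∞} proper closed convex, f = φ + ψ with finite minimum f̄ attained on nonempty set X̄. Let x_{k+1} = Prox_{1/L}(x_k − (1/L)∇φ(x_k)). Then for all k ≥ 1, f(x_k) − f̄ ≤ L·dist(x₀, X̄)²/(2k). -/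
open scoped RealInnerProductSpace

variable {E : Type*} [NormedAddCommGroup E] [InnerProductSpace ℝ E] [FiniteDimensional ℝ E]

/-!
Every step satisfies, for each `z` in the domain of `ψ` and `F = φ + ψ`,
`F(x_{k+1}) + L/2‖z - x_{k+1}‖² ≤ F(z) + L/2‖z - x_k‖²`:
the prox is the minimizer of the linearization of `φ` at `x_k` plus `ψ + L/2‖· - x_k‖²`,
so its three-point property combines with the descent lemma (upper model of `φ`) and the
gradient inequality (lower model of `φ`). Taking `z = x_k` shows that `F(x_k)` is nonincreasing;
taking `z ∈ X̄` and summing over the first `k` steps telescopes to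
`k (F(x_k) - f̄) ≤ L/2‖z - x₀‖²`.
-/

open Set Filter Topology AffineMap Metric

lemma Antitone.succ_mul_sub_le {b D : ℕ → ℝ} {c : ℝ} (hb : Antitone b) (hD : ∀ j, 0 ≤ D j)
    (h : ∀ j, b j + D (j + 1) ≤ c + D j) (k : ℕ) : (k + 1) * (b k - c) ≤ D 0 := by
  have key : ∀ k : ℕ, (k + 1) * (b k - c) + D (k + 1) ≤ D 0 := by
    intro k
    induction k with
    | zero => simp only [Nat.cast_zero, zero_add, one_mul]; linarith [h 0]
    | succ k ih =>
      have hbk : (k + 1) * (b (k + 1) - c) ≤ (k + 1) * (b k - c) := by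
        gcongr
        exact hb k.le_succ
      push_cast
      linarith [h (k + 1)]
  linarith [key k, hD (k + 1)]

lemma Metric.le_infDist_sq {α : Type*} [PseudoMetricSpace α] {x : α} {s : Set α}
    (hs : s.Nonempty) {c : ℝ} (h : ∀ y ∈ s, c ≤ dist x y ^ 2) : c ≤ infDist x s ^ 2 := by
  have : √c ≤ infDist x s :=
    (le_infDist hs).2 fun y hy => Real.sqrt_le_iff.2 ⟨dist_nonneg, h y hy⟩
  exact (Real.sqrt_le_iff.1 this).2

lemma le_add_deriv_add_of_deriv_sub_le_mul {q q' : ℝ → ℝ} {K : ℝ}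
    (hq : ∀ t, HasDerivAt q (q' t) t) (hK : ∀ t ∈ Ioo (0 : ℝ) 1, q' t - q' 0 ≤ K * t) :
    q 1 ≤ q 0 + q' 0 + K / 2 := by
  set h : ℝ → ℝ := fun t => q t - t * q' 0 - K / 2 * t ^ 2
  have hh : ∀ t, HasDerivAt h (q' t - q' 0 - K * t) t := fun t =>
    (((hq t).sub ((hasDerivAt_id' t).mul_const (q' 0))).sub
      ((hasDerivAt_pow 2 t).const_mul (K / 2))).congr_deriv (by simp; ring)
  have hanti : AntitoneOn h (Icc 0 1) :=
    antitoneOn_of_hasDerivWithinAt_nonpos (convex_Icc 0 1)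
      (fun t _ => (hh t).continuousAt.continuousWithinAt) (fun t _ => (hh t).hasDerivWithinAt)
      (fun t ht => by rw [interior_Icc] at ht; linarith [hK t ht])
  have := hanti (left_mem_Icc.2 zero_le_one) (right_mem_Icc.2 zero_le_one) zero_le_one
  simp only [h] at this
  linarith

section InnerProduct

variable {F : Type*} [NormedAddCommGroup F] [InnerProductSpace ℝ F]

lemma norm_lineMap_sub_sq (a b v : F) (l : ℝ) :
    ‖lineMap a b l - v‖ ^ 2 =
      (1 - l) * ‖a - v‖ ^ 2 + l * ‖b - v‖ ^ 2 - l * (1 - l) * ‖b - a‖ ^ 2 := by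
  have hsplit : lineMap a b l - v = (a - v) + l • ((b - v) - (a - v)) := by
    rw [lineMap_apply_module']
    module
  have hba : b - a = (b - v) - (a - v) := by abel
  rw [hsplit, hba, norm_add_sq_real, norm_smul, real_inner_smul_right, mul_pow, Real.norm_eq_abs,
    sq_abs, norm_sub_sq_real (b - v), inner_sub_right, real_inner_self_eq_norm_sq,
    real_inner_comm]
  ring

lemma ProperFn.coe_toReal {α : Type*} {ψ : α → EReal} (hψ : ProperFn ψ) {x : α} (hx : ψ x ≠ ⊤) :
    (((ψ x).toReal : ℝ) : EReal) = ψ x :=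
  EReal.coe_toReal hx (hψ.2 x)

lemma IsProxPt.ne_top {α : Type*} [NormedAddCommGroup α] {ψ : α → EReal} (hψ : ProperFn ψ)
    {t : ℝ} {v p : α} (hp : IsProxPt ψ t v p) : ψ p ≠ ⊤ := by
  obtain ⟨y, hy⟩ := hψ.1
  intro htop
  have := hp y
  rw [htop, EReal.top_add_coe, top_le_iff] at this
  exact EReal.add_ne_top hy (EReal.coe_ne_top _) this

theorem IsProxPt.three_point {ψ : F → EReal} (hψc : EConvex ψ) (hψp : ProperFn ψ) {t : ℝ}
    {v p : F} (hp : IsProxPt ψ t v p) {z : F} (hz : ψ z ≠ ⊤) :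
    (ψ p).toReal + ‖p - v‖ ^ 2 / (2 * t) + ‖z - p‖ ^ 2 / (2 * t) ≤
      (ψ z).toReal + ‖z - v‖ ^ 2 / (2 * t) := by
  set a := (ψ p).toReal
  set b := (ψ z).toReal
  have hpa : ψ p = a := (hψp.coe_toReal (hp.ne_top hψp)).symm
  have hzb : ψ z = b := (hψp.coe_toReal hz).symm
  -- Compare `p` with the points `lineMap p z l` of the segment towards `z`, then let `l → 0`.
  have hseg : ∀ l ∈ Ioc (0 : ℝ) 1, a + ‖p - v‖ ^ 2 / (2 * t) + (1 - l) * (‖z - p‖ ^ 2 / (2 * t)) ≤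
      b + ‖z - v‖ ^ 2 / (2 * t) := by
    rintro l ⟨hl0, hl1⟩
    have hconv : ψ (lineMap p z l) ≤ ((1 - l) * a + l * b : ℝ) := by
      have := hψc p z (1 - l) l (by linarith) hl0.le (by ring)
      rwa [hpa, hzb, ← lineMap_apply_module, ← EReal.coe_mul, ← EReal.coe_mul,
        ← EReal.coe_add] at this
    have hmin : a + ‖p - v‖ ^ 2 / (2 * t) ≤
        (1 - l) * a + l * b + ‖lineMap p z l - v‖ ^ 2 / (2 * t) := by
      have := (hp (lineMap p z l)).trans (add_le_add_left hconv _)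
      rwa [hpa, ← EReal.coe_add, ← EReal.coe_add, EReal.coe_le_coe_iff] at this
    rw [norm_lineMap_sub_sq] at hmin
    refine le_of_mul_le_mul_left ?_ hl0
    linear_combination hmin
  have hlim : Tendsto (fun l : ℝ => a + ‖p - v‖ ^ 2 / (2 * t) + (1 - l) * (‖z - p‖ ^ 2 / (2 * t)))
      (𝓝[>] 0) (𝓝 (a + ‖p - v‖ ^ 2 / (2 * t) + ‖z - p‖ ^ 2 / (2 * t))) := by
    have hcont : Continuous fun l : ℝ =>
        a + ‖p - v‖ ^ 2 / (2 * t) + (1 - l) * (‖z - p‖ ^ 2 / (2 * t)) := by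
      fun_prop
    simpa using (hcont.tendsto 0).mono_left nhdsWithin_le_nhds
  exact le_of_tendsto hlim (Filter.mem_of_superset (Ioc_mem_nhdsGT zero_lt_one) hseg)

section Gradient

variable [CompleteSpace F]

lemma HasGradientAt.hasDerivAt_comp_lineMap {φ : F → ℝ} {g x y : F} {t : ℝ}
    (h : HasGradientAt φ g (lineMap x y t)) :
    HasDerivAt (φ ∘ lineMap x y) ⟪g, y - x⟫ t := by
  simpa [InnerProductSpace.toDual_apply_apply] using
    h.hasFDerivAt.comp_hasDerivAt t hasDerivAt_lineMap

theorem le_add_inner_add_of_lipschitz_gradient {φ : F → ℝ} {φ' : F → F}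
    (hφd : ∀ v, HasGradientAt φ (φ' v) v) {L : ℝ} (hlip : ∀ u v, ‖φ' u - φ' v‖ ≤ L * ‖u - v‖)
    (x y : F) : φ y ≤ φ x + ⟪φ' x, y - x⟫ + L / 2 * ‖y - x‖ ^ 2 := by
  have key := le_add_deriv_add_of_deriv_sub_le_mul (q := φ ∘ lineMap x y)
    (K := L * ‖y - x‖ ^ 2) (fun t => (hφd _).hasDerivAt_comp_lineMap) fun t ht => ?_
  · simp only [Function.comp, lineMap_apply_zero, lineMap_apply_one] at key
    linarith
  have hdist : ‖lineMap x y t - x‖ = t * ‖y - x‖ := by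
    rw [← vsub_eq_sub, lineMap_vsub_left, vsub_eq_sub, norm_smul, Real.norm_of_nonneg ht.1.le]
  calc ⟪φ' (lineMap x y t), y - x⟫ - ⟪φ' (lineMap x y (0 : ℝ)), y - x⟫
      = ⟪φ' (lineMap x y t) - φ' x, y - x⟫ := by rw [lineMap_apply_zero, inner_sub_left]
    _ ≤ ‖φ' (lineMap x y t) - φ' x‖ * ‖y - x‖ := real_inner_le_norm _ _
    _ ≤ L * (t * ‖y - x‖) * ‖y - x‖ := by
        gcongr
        exact hdist ▸ hlip _ _
    _ = L * ‖y - x‖ ^ 2 * t := by ring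

theorem ConvexOn.add_inner_sub_le_of_hasGradientAt {φ : F → ℝ} {g x : F}
    (hφc : ConvexOn ℝ univ φ) (hg : HasGradientAt φ g x) (z : F) :
    φ x + ⟪g, z - x⟫ ≤ φ z := by
  have hq : ConvexOn ℝ univ (φ ∘ lineMap (k := ℝ) x z) := hφc.comp_affineMap _
  have hd : HasDerivAt (φ ∘ lineMap (k := ℝ) x z) ⟪g, z - x⟫ 0 :=
    HasGradientAt.hasDerivAt_comp_lineMap (t := 0) (by rwa [lineMap_apply_zero])
  have := hq.le_slope_of_hasDerivAt (mem_univ (0 : ℝ)) (mem_univ 1) zero_lt_one hd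
  simp only [slope_def_field, Function.comp, lineMap_apply_zero, lineMap_apply_one] at this
  linarith

theorem proxGrad_step_le {φ : F → ℝ} {φ' : F → F} (hφd : ∀ v, HasGradientAt φ (φ' v) v)
    (hφc : ConvexOn ℝ univ φ) {L : ℝ} (hL : 0 < L) (hlip : ∀ u v, ‖φ' u - φ' v‖ ≤ L * ‖u - v‖)
    {ψ : F → EReal} (hψc : EConvex ψ) (hψp : ProperFn ψ) {x x' : F}
    (hx' : IsProxPt ψ (1 / L) (x - (1 / L) • φ' x) x') {z : F} (hz : ψ z ≠ ⊤) :
    φ x' + (ψ x').toReal + L / 2 * ‖z - x'‖ ^ 2 ≤ φ z + (ψ z).toReal + L / 2 * ‖z - x‖ ^ 2 := by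
  have hmodel : ∀ w, ‖w - (x - (1 / L) • φ' x)‖ ^ 2 / (2 * (1 / L)) =
      ⟪φ' x, w - x⟫ + L / 2 * ‖w - x‖ ^ 2 + ‖φ' x‖ ^ 2 / (2 * L) := fun w => by
    rw [sub_sub_eq_add_sub, add_sub_right_comm, norm_add_sq_real, real_inner_smul_right, norm_smul,
      mul_pow, Real.norm_of_nonneg (by positivity), real_inner_comm]
    field_simp
    ring
  have hprox := hx'.three_point hψc hψp hz
  have hhalf : ‖z - x'‖ ^ 2 / (2 * (1 / L)) = L / 2 * ‖z - x'‖ ^ 2 := by field_simp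
  rw [hmodel, hmodel, hhalf] at hprox
  linarith [le_add_inner_add_of_lipschitz_gradient hφd hlip x x',
    hφc.add_inner_sub_le_of_hasGradientAt (hφd x) z]

end Gradient

end InnerProduct

theorem prox_grad_rate_general (φ : E → ℝ) (φ' : E → E)
    (hφd : ∀ v, HasGradientAt φ (φ' v) v) (hφc : ConvexOn ℝ Set.univ φ)
    (L : ℝ) (hL : 0 < L) (hlip : ∀ u v : E, ‖φ' u - φ' v‖ ≤ L * ‖u - v‖)
    (ψ : E → EReal) (hψc : EConvex ψ) (hψp : ProperFn ψ)
    (f : E → EReal) (hf : ∀ v, f v = ((φ v : ℝ) : EReal) + ψ v)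
    (fbar : ℝ) (Xbar : Set E) (hXbar : Xbar = {v : E | f v = ((fbar : ℝ) : EReal)})
    (hne : Xbar.Nonempty)
    (x : ℕ → E)
    (hstep : ∀ k : ℕ, IsProxPt ψ (1/L) (x k - (1/L) • φ' (x k)) (x (k+1))) :
    ∀ k : ℕ, 1 ≤ k →
      f (x k) ≤ ((fbar + L * (Metric.infDist (x 0) Xbar)^2 / (2*(k:ℝ)) : ℝ) : EReal) := by
  set F : E → ℝ := fun v => φ v + (ψ v).toReal
  have hfF : ∀ v, ψ v ≠ ⊤ → f v = F v := fun v hv => by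
    rw [hf, EReal.coe_add, hψp.coe_toReal hv]
  have hψx : ∀ j, ψ (x (j + 1)) ≠ ⊤ := fun j => (hstep j).ne_top hψp
  have hstep_le := fun j {z} (hz : ψ z ≠ ⊤) =>
    proxGrad_step_le hφd hφc hL hlip hψc hψp (hstep j) hz
  have hanti : Antitone fun j => F (x (j + 1)) := antitone_nat_of_succ_le fun j => by
    have := hstep_le (j + 1) (hψx j)
    rw [sub_self, norm_zero] at this
    linarith [show 0 ≤ L / 2 * ‖x (j + 1) - x (j + 1 + 1)‖ ^ 2 by positivity]
  intro k hk
  obtain ⟨m, rfl⟩ : ∃ m, k = m + 1 := ⟨k - 1, by omega⟩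
  have hgap : 2 * (m + 1) * (F (x (m + 1)) - fbar) / L ≤ infDist (x 0) Xbar ^ 2 := by
    refine le_infDist_sq hne fun z hz => ?_
    rw [hXbar] at hz
    have hψz : ψ z ≠ ⊤ := fun htop => by simp [hf, htop] at hz
    have hFz : F z = fbar := by exact_mod_cast (hfF z hψz).symm.trans hz
    have := hanti.succ_mul_sub_le (c := fbar) (D := fun j => L / 2 * ‖z - x j‖ ^ 2)
      (fun j => by positivity) (fun j => (hstep_le j hψz).trans_eq (by rw [← hFz])) m
    rw [div_le_iff₀ hL, dist_comm, dist_eq_norm]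
    linarith
  rw [div_le_iff₀ hL] at hgap
  rw [hfF _ (hψx m), EReal.coe_le_coe_iff, ← sub_le_iff_le_add', le_div_iff₀ (by positivity)]
  push_cast
  linarith

/-- `O(1/k)` convergence rate of the proximal gradient method. -/
theorem prox_grad_rate (φ : E → ℝ) (φ' : E → E)
    (hφd : ∀ v, HasGradientAt φ (φ' v) v) (hφc : ConvexOn ℝ Set.univ φ)
    (L : ℝ) (hL : 0 < L) (hlip : ∀ u v : E, ‖φ' u - φ' v‖ ≤ L * ‖u - v‖)
    (ψ : E → EReal) (hψc : EConvex ψ) (hψp : ProperFn ψ) (hψlsc : LowerSemicontinuous ψ)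
    (f : E → EReal) (hf : ∀ v, f v = ((φ v : ℝ) : EReal) + ψ v)
    (fbar : ℝ) (Xbar : Set E) (hXbar : Xbar = {v : E | f v = ((fbar : ℝ) : EReal)})
    (hne : Xbar.Nonempty) (hmin : ∀ v : E, ((fbar : ℝ) : EReal) ≤ f v)
    (x : ℕ → E)
    (hstep : ∀ k : ℕ, IsProxPt ψ (1/L) (x k - (1/L) • φ' (x k)) (x (k+1))) :
    ∀ k : ℕ, 1 ≤ k →
      f (x k) ≤ ((fbar + L * (Metric.infDist (x 0) Xbar)^2 / (2*(k:ℝ)) : ℝ) : EReal) :=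
  prox_grad_rate_general φ φ' hφd hφc L hL hlip ψ hψc hψp f hf fbar Xbar hXbar hne x hstep
end

section
/- Under the hypotheses of Theorem 1 with t_k > 0 and θ_k ∈ (0,1] satisfying ∑_{i=0}^{k−1} t_i/θ_i = (1−θ_k) ∑_{i=0}^{k} t_i/θ_i, the accelerated proximal gradient iterates satisfy f(x_k) ≤ −f*(z_k) + ⟨z_k, x₀⟩ − (∑_{i=0}^{k−1} t_i/θ_i)/2 · ‖z_k‖², where z_k = (∑_{i=0}^{k−1} (t_i/θ_i) g_i)/(∑_{i=0}^{k−1} t_i/θ_i). -/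
/-!
Write `τᵢ = tᵢ / θᵢ`, `Sₖ = ∑_{i<k} τᵢ` and `vₖ = x₀ - ∑_{i<k} τᵢ gᵢ`, so that `vₖ = x₀ - Sₖ zₖ`;
the momentum step keeps `yₖ = (1 - θₖ) xₖ + θₖ vₖ`. The prox-gradient inequality
`f(xₖ₊₁) ≤ f(u) + ⟪gₖ, yₖ - u⟫ - tₖ/2 ‖gₖ‖²`, taken at `u = w` and `u = xₖ` with weights `θₖ` and
`1 - θₖ`, makes `Sₖ (f(xₖ) - f(w)) + ‖vₖ - w‖²/2` nonincreasing: the step-size rule is exactly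
`Sₖ₊₁ θₖ² = tₖ`, which cancels the `‖gₖ‖²` terms. Expanding `‖x₀ - Sₖ zₖ - w‖²` then gives
`f(xₖ) + ⟪zₖ, w⟫ - f(w) ≤ ⟪zₖ, x₀⟫ - Sₖ/2 ‖zₖ‖²` for every `w`, and the supremum over `w` is the
conjugate.
-/

open scoped RealInnerProductSpace

variable {E : Type*} [NormedAddCommGroup E] [InnerProductSpace ℝ E] [FiniteDimensional ℝ E]

theorem ProperFn.add_coe {α : Type*} {φ : α → ℝ} {ψ f : α → EReal} (hψ : ProperFn ψ)
    (hf : ∀ v, f v = ((φ v : ℝ) : EReal) + ψ v) : ProperFn f := by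
  obtain ⟨u, hu⟩ := hψ.1
  refine ⟨⟨u, ?_⟩, fun v => ?_⟩ <;> rw [hf]
  · exact (EReal.add_lt_top (EReal.coe_ne_top _) hu).ne
  · exact EReal.add_ne_bot_iff.2 ⟨EReal.coe_ne_bot _, hψ.2 v⟩

section
variable {V : Type*} [NormedAddCommGroup V] [InnerProductSpace ℝ V]

theorem ConvexOn.add_inner_gradient_le [CompleteSpace V] {φ : V → ℝ} {φ' a : V}
    (hc : ConvexOn ℝ Set.univ φ) (hd : HasGradientAt φ φ' a) (b : V) : φ a + ⟪φ', b - a⟫ ≤ φ b := by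
  have hl : ConvexOn ℝ Set.univ (φ ∘ AffineMap.lineMap (k := ℝ) a b) := by
    simpa using hc.comp_affineMap (AffineMap.lineMap (k := ℝ) a b)
  have hderiv : HasDerivAt (φ ∘ AffineMap.lineMap (k := ℝ) a b) ⟪φ', b - a⟫ 0 := by
    have := (AffineMap.lineMap_apply_zero a b (k := ℝ)).symm ▸ hd.hasFDerivAt
    simpa using this.comp_hasDerivAt (0 : ℝ) AffineMap.hasDerivAt_lineMap
  have := hl.le_slope_of_hasDerivAt (Set.mem_univ 0) (Set.mem_univ 1) zero_lt_one hderiv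
  simp only [slope_def_field, Function.comp_apply, AffineMap.lineMap_apply_one,
    AffineMap.lineMap_apply_zero, sub_zero, div_one] at this
  linarith

theorem norm_sub_smul_sq (a b : V) (c : ℝ) :
    ‖a - c • b‖ ^ 2 = ‖a‖ ^ 2 - 2 * c * ⟪b, a⟫ + c ^ 2 * ‖b‖ ^ 2 := by
  rw [norm_sub_sq_real, real_inner_smul_right, norm_smul, mul_pow, Real.norm_eq_abs, sq_abs,
    real_inner_comm]
  ring

theorem le_convex_comb_of_le_of_le {θ t F F' r : ℝ} {g x y v w : V} (hθ0 : 0 ≤ θ) (hθ1 : θ ≤ 1)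
    (hy : y = (1 - θ) • x + θ • v)
    (hw : F' ≤ r + (⟪g, y - w⟫ - t / 2 * ‖g‖ ^ 2))
    (hx : F' ≤ F + (⟪g, y - x⟫ - t / 2 * ‖g‖ ^ 2)) :
    F' ≤ θ * r + (1 - θ) * F + θ * ⟪g, v - w⟫ - t / 2 * ‖g‖ ^ 2 := by
  have hgy : ⟪g, y⟫ = (1 - θ) * ⟪g, x⟫ + θ * ⟪g, v⟫ := by
    rw [hy, inner_add_right, real_inner_smul_right, real_inner_smul_right]
  rw [inner_sub_right] at hw hx ⊢
  nlinarith [mul_le_mul_of_nonneg_left hw hθ0, mul_le_mul_of_nonneg_left hx (sub_nonneg.2 hθ1)]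

theorem lyapunov_step {θ t S S' F F' r : ℝ} {g v w : V} (hθ : θ ≠ 0) (hS' : 0 ≤ S')
    (hS : S' = S + t / θ) (hSθ : S' * θ = t / θ)
    (hF' : F' ≤ θ * r + (1 - θ) * F + θ * ⟪g, v - w⟫ - t / 2 * ‖g‖ ^ 2) :
    S' * (F' - r) + ‖v - (t / θ) • g - w‖ ^ 2 / 2 ≤ S * (F - r) + ‖v - w‖ ^ 2 / 2 := by
  have hτ : θ * (t / θ) = t := mul_div_cancel₀ t hθ
  calc S' * (F' - r) + ‖v - (t / θ) • g - w‖ ^ 2 / 2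
      = S * (F - r) + ‖v - w‖ ^ 2 / 2
        + S' * (F' - (θ * r + (1 - θ) * F + θ * ⟪g, v - w⟫ - t / 2 * ‖g‖ ^ 2)) := by
        rw [sub_right_comm, norm_sub_smul_sq]
        linear_combination (F - r) * hS + (r - F + ⟪g, v - w⟫ - t / θ * ‖g‖ ^ 2 / 2) * hSθ
          + ‖g‖ ^ 2 / 2 * S' * hτ
    _ ≤ S * (F - r) + ‖v - w‖ ^ 2 / 2 :=
        add_le_of_nonpos_right (mul_nonpos_of_nonneg_of_nonpos hS' (sub_nonpos.2 hF'))

theorem add_inner_le_of_lyapunov {S F r : ℝ} {x₀ z w : V} (hS : 0 < S)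
    (h : S * (F - r) + ‖x₀ - S • z - w‖ ^ 2 / 2 ≤ ‖x₀ - w‖ ^ 2 / 2) :
    F + ⟪z, w⟫ ≤ r + (⟪z, x₀⟫ - S / 2 * ‖z‖ ^ 2) := by
  rw [sub_right_comm, norm_sub_smul_sq, inner_sub_right] at h
  have : S * (F + ⟪z, w⟫ - (r + (⟪z, x₀⟫ - S / 2 * ‖z‖ ^ 2))) ≤ 0 := by linear_combination h
  exact sub_nonpos.1 (nonpos_of_mul_nonpos_right this hS)

theorem momentum_eq_convex_comb (t θ : ℕ → ℝ) (x y g : ℕ → V) (hθ : ∀ k, θ k ≠ 0)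
    (hy0 : y 0 = x 0) (hx : ∀ k, x (k + 1) = y k - t k • g k)
    (hy : ∀ k, y (k + 1) = x (k + 1) + ((θ (k + 1) * (1 - θ k)) / θ k) • (x (k + 1) - x k)) :
    ∀ k, y k = (1 - θ k) • x k + θ k • (x 0 - ∑ i ∈ Finset.range k, (t i / θ i) • g i) := by
  intro k
  induction k with
  | zero => simp [hy0, ← add_smul]
  | succ k ih =>
    rw [hy, hx, ih, Finset.sum_range_succ]
    match_scalars <;> field_simp [hθ k] <;> ring

theorem lyapunov_bound (t θ : ℕ → ℝ) (x y g : ℕ → V) (F : ℕ → ℝ) (r : ℝ) (w : V)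
    (ht : ∀ k, 0 < t k) (hθ : ∀ k, θ k ∈ Set.Ioc (0 : ℝ) 1)
    (hcond : ∀ k : ℕ,
      (∑ i ∈ Finset.range k, t i / θ i) = (1 - θ k) * ∑ i ∈ Finset.range (k + 1), t i / θ i)
    (hy0 : y 0 = x 0) (hx : ∀ k, x (k + 1) = y k - t k • g k)
    (hy : ∀ k, y (k + 1) = x (k + 1) + ((θ (k + 1) * (1 - θ k)) / θ k) • (x (k + 1) - x k))
    (hFw : ∀ k, F (k + 1) ≤ r + (⟪g k, y k - w⟫ - t k / 2 * ‖g k‖ ^ 2))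
    (hFx : ∀ k, F (k + 2) ≤ F (k + 1) + (⟪g (k + 1), y (k + 1) - x (k + 1)⟫
      - t (k + 1) / 2 * ‖g (k + 1)‖ ^ 2)) (k : ℕ) :
    (∑ i ∈ Finset.range k, t i / θ i) * (F k - r)
      + ‖x 0 - ∑ i ∈ Finset.range k, (t i / θ i) • g i - w‖ ^ 2 / 2 ≤ ‖x 0 - w‖ ^ 2 / 2 := by
  have hyv := momentum_eq_convex_comb t θ x y g (fun k => (hθ k).1.ne') hy0 hx hy
  -- at `k = 0` the step-size rule reads `0 = (1 - θ 0) * (t 0 / θ 0)`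
  have hθ0 : θ 0 = 1 := by
    have h := hcond 0
    rw [Finset.sum_range_zero, Finset.sum_range_one, eq_comm, mul_eq_zero] at h
    exact (sub_eq_zero.1 (h.resolve_right (div_pos (ht 0) (hθ 0).1).ne')).symm
  induction k with
  | zero => simp
  | succ k ih =>
    refine le_trans ?_ ih
    have hcomb : F (k + 1) ≤ θ k * r + (1 - θ k) * F k
        + θ k * ⟪g k, x 0 - ∑ i ∈ Finset.range k, (t i / θ i) • g i - w⟫ - t k / 2 * ‖g k‖ ^ 2 := by
      cases k with
      | zero =>
        have h := hFw 0
        rw [hy0] at h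
        simp only [hθ0, sub_self, Finset.sum_range_zero, sub_zero]
        linarith
      | succ k => exact le_convex_comb_of_le_of_le (hθ _).1.le (hθ _).2 (hyv _) (hFw _) (hFx k)
    rw [Finset.sum_range_succ, Finset.sum_range_succ, ← sub_sub]
    refine lyapunov_step (hθ k).1.ne' ?_ rfl ?_ hcomb
    · exact add_nonneg (Finset.sum_nonneg fun i _ => (div_pos (ht i) (hθ i).1).le)
        (div_pos (ht k) (hθ k).1).le
    · have h := hcond k
      rw [Finset.sum_range_succ] at h
      linear_combination h

theorem proxGrad_le_add_inner [CompleteSpace V] {φ : V → ℝ} {ψ f : V → EReal} {y x' d gψ g : V}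
    {t : ℝ} (hf : ∀ v, f v = ((φ v : ℝ) : EReal) + ψ v) (hφc : ConvexOn ℝ Set.univ φ)
    (hd : HasGradientAt φ d y) (hgψ : gψ ∈ SubgradAt ψ x') (hg : g = d + gψ)
    (hdec : f x' ≤ ((φ y + ⟪gψ, y - x'⟫ - t / 2 * ‖g‖ ^ 2 : ℝ) : EReal) + ψ x') (u : V) :
    f x' ≤ f u + ((⟪g, y - u⟫ - t / 2 * ‖g‖ ^ 2 : ℝ) : EReal) := by
  have hψ : ψ x' ≤ ψ u + ((-⟪gψ, u - x'⟫ : ℝ) : EReal) :=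
    calc ψ x' = ψ x' + ((⟪gψ, u - x'⟫ : ℝ) : EReal) + ((-⟪gψ, u - x'⟫ : ℝ) : EReal) := by
          rw [add_assoc, ← EReal.coe_add, add_neg_cancel, EReal.coe_zero, add_zero]
      _ ≤ ψ u + ((-⟪gψ, u - x'⟫ : ℝ) : EReal) := by gcongr; exact hgψ u
  have hφ := hφc.add_inner_gradient_le hd u
  calc f x'
      ≤ ((φ y + ⟪gψ, y - x'⟫ - t / 2 * ‖g‖ ^ 2 : ℝ) : EReal)
          + (ψ u + ((-⟪gψ, u - x'⟫ : ℝ) : EReal)) := by grw [hdec, hψ]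
    _ = ((φ y + ⟪gψ, y - x'⟫ - t / 2 * ‖g‖ ^ 2 - ⟪gψ, u - x'⟫ : ℝ) : EReal) + ψ u := by
        rw [add_left_comm, add_comm, ← EReal.coe_add, ← sub_eq_add_neg]
    _ ≤ ((φ u + (⟪g, y - u⟫ - t / 2 * ‖g‖ ^ 2) : ℝ) : EReal) + ψ u := by
        gcongr
        rw [hg, inner_add_left]
        simp only [inner_sub_right] at hφ ⊢
        linarith
    _ = f u + ((⟪g, y - u⟫ - t / 2 * ‖g‖ ^ 2 : ℝ) : EReal) := by
        rw [hf, EReal.coe_add, add_right_comm]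

theorem le_neg_conjFn_add {f : V → EReal} {z : V} {F c : ℝ} (hbot : ∀ w, f w ≠ ⊥)
    (h : ∀ w (r : ℝ), f w = r → F + ⟪z, w⟫ ≤ r + c) : (F : EReal) ≤ -conjFn f z + c := by
  have hconj : conjFn f z ≤ ((c - F : ℝ) : EReal) := by
    refine iSup_le fun w => ?_
    by_cases htop : f w = ⊤
    · simp [htop]
    · have hw := (EReal.coe_toReal htop (hbot w)).symm
      rw [hw, ← EReal.coe_sub, EReal.coe_le_coe_iff]
      linarith [h w _ hw]
  calc (F : EReal) = -((c - F : ℝ) : EReal) + c := by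
        rw [← EReal.coe_neg, ← EReal.coe_add]; congr 1; ring
    _ ≤ -conjFn f z + c := by gcongr; exact EReal.neg_le_neg_iff.2 hconj

end

theorem thm1_case_b_general (φ : E → ℝ) (φ' : E → E)
    (hφd : ∀ v, HasGradientAt φ (φ' v) v) (hφc : ConvexOn ℝ Set.univ φ)
    (ψ : E → EReal) (hψp : ProperFn ψ)
    (f : E → EReal) (hf : ∀ v, f v = ((φ v : ℝ) : EReal) + ψ v)
    (t : ℕ → ℝ) (ht : ∀ k, 0 < t k)
    (θ : ℕ → ℝ) (hθmem : ∀ k, θ k ∈ Set.Ioc (0:ℝ) 1)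
    (hcond : ∀ k : ℕ,
      (∑ i ∈ Finset.range k, t i / θ i) = (1 - θ k) * ∑ i ∈ Finset.range (k+1), t i / θ i)
    (x y g gψ : ℕ → E) (hy0 : y 0 = x 0)
    (hgψ : ∀ k, gψ k ∈ SubgradAt ψ (x (k+1)))
    (hg : ∀ k, g k = φ' (y k) + gψ k)
    (hx : ∀ k, x (k+1) = y k - t k • g k)
    (hy : ∀ k, y (k+1) = x (k+1) + ((θ (k+1) * (1 - θ k)) / θ k) • (x (k+1) - x k))
    (hdec : ∀ k, f (x (k+1)) ≤
      ((φ (y k) + ⟪gψ k, y k - x (k+1)⟫ - t k / 2 * ‖g k‖^2 : ℝ) : EReal) + ψ (x (k+1)))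
    (z : ℕ → E)
    (hz : ∀ k, z k = (∑ i ∈ Finset.range k, t i / θ i)⁻¹ •
      ∑ i ∈ Finset.range k, (t i / θ i) • g i) :
    ∀ k : ℕ, 1 ≤ k →
      f (x k)
        ≤ -(conjFn f (z k)) +
            ((⟪z k, x 0⟫ - (∑ i ∈ Finset.range k, t i / θ i) / 2 * ‖z k‖^2 : ℝ) : EReal) := by
  have hstep : ∀ j u, f (x (j + 1)) ≤ f u + ((⟪g j, y j - u⟫ - t j / 2 * ‖g j‖ ^ 2 : ℝ) : EReal) :=
    fun j => proxGrad_le_add_inner hf hφc (hφd (y j)) (hgψ j) (hg j) (hdec j)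
  have hfp : ProperFn f := hψp.add_coe hf
  obtain ⟨u₀, hu₀⟩ := hfp.1
  have hfin : ∀ j, f (x (j + 1)) = ((f (x (j + 1))).toReal : EReal) := fun j =>
    (EReal.coe_toReal (ne_top_of_le_ne_top (EReal.add_lt_top hu₀ (EReal.coe_ne_top _)).ne
      (hstep j u₀)) (hfp.2 _)).symm
  have hreal : ∀ j u (r : ℝ), f u = r →
      (f (x (j + 1))).toReal ≤ r + (⟪g j, y j - u⟫ - t j / 2 * ‖g j‖ ^ 2) := fun j u r hu => by
    have h := hstep j u
    rwa [hfin j, hu, ← EReal.coe_add, EReal.coe_le_coe_iff] at h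
  intro k hk
  obtain ⟨j, rfl⟩ := Nat.exists_eq_add_of_le' hk
  have hS : 0 < ∑ i ∈ Finset.range (j + 1), t i / θ i :=
    Finset.sum_pos (fun i _ => div_pos (ht i) (hθmem i).1) Finset.nonempty_range_add_one
  rw [hfin j]
  refine le_neg_conjFn_add hfp.2 fun w r hw => add_inner_le_of_lyapunov hS ?_
  have h := lyapunov_bound t θ x y g (fun k => (f (x k)).toReal) r w ht hθmem hcond hy0 hx hy
    (fun j => hreal j w r hw) (fun j => hreal (j + 1) (x (j + 1)) _ (hfin j)) (j + 1)
  rwa [hz, smul_smul, mul_inv_cancel₀ hS.ne', one_smul]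

/-- Theorem 1, case (b): conjugate-based bound for the accelerated
proximal gradient method. -/
theorem thm1_case_b (φ : E → ℝ) (φ' : E → E)
    (hφd : ∀ v, HasGradientAt φ (φ' v) v) (hφc : ConvexOn ℝ Set.univ φ)
    (ψ : E → EReal) (hψc : EConvex ψ) (hψp : ProperFn ψ) (hψlsc : LowerSemicontinuous ψ)
    (f : E → EReal) (hf : ∀ v, f v = ((φ v : ℝ) : EReal) + ψ v)
    (t : ℕ → ℝ) (ht : ∀ k, 0 < t k)
    (θ : ℕ → ℝ) (hθ0 : θ 0 = 1) (hθmem : ∀ k, θ k ∈ Set.Ioc (0:ℝ) 1)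
    (hcond : ∀ k : ℕ,
      (∑ i ∈ Finset.range k, t i / θ i) = (1 - θ k) * ∑ i ∈ Finset.range (k+1), t i / θ i)
    (x y g gψ : ℕ → E) (hy0 : y 0 = x 0)
    (hgψ : ∀ k, gψ k ∈ SubgradAt ψ (x (k+1)))
    (hg : ∀ k, g k = φ' (y k) + gψ k)
    (hx : ∀ k, x (k+1) = y k - t k • g k)
    (hy : ∀ k, y (k+1) = x (k+1) + ((θ (k+1) * (1 - θ k)) / θ k) • (x (k+1) - x k))
    (hdec : ∀ k, f (x (k+1)) ≤
      ((φ (y k) + ⟪gψ k, y k - x (k+1)⟫ - t k / 2 * ‖g k‖^2 : ℝ) : EReal) + ψ (x (k+1)))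
    (z : ℕ → E)
    (hz : ∀ k, z k = (∑ i ∈ Finset.range k, t i / θ i)⁻¹ •
      ∑ i ∈ Finset.range k, (t i / θ i) • g i) :
    ∀ k : ℕ, 1 ≤ k →
      f (x k)
        ≤ -(conjFn f (z k)) +
            ((⟪z k, x 0⟫ - (∑ i ∈ Finset.range k, t i / θ i) / 2 * ‖z k‖^2 : ℝ) : EReal) :=
  thm1_case_b_general φ φ' hφd hφc ψ hψp f hf t ht θ hθmem hcond x y g gψ hy0 hgψ hg hx hy hdec z hz
end

section
/- FISTA with backtracking rate (Theorem 2 consequence): Suppose f = φ + ψ has finite minimum f̄ attained on nonempty X̄, the step sizes t_k > 0 are non-increasing, satisfy the decrease condition and t_k ≥ 1/L, θ₀ = 1 and θ_{k+1}² ≥ θ_k²(1−θ_{k+1}) with θ_k ∈ (0,1]. Then the iterates of the proximal gradient template satisfy f(x_k) − f̄ ≤ θ_{k−1}²·dist(x₀, X̄)²/(2 t_{k−1}) ≤ L θ_{k−1}²·dist(x₀, X̄)²/2 for k ≥ 1. -/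
/-!
The three-point inequality `f x⁺ ≤ f z + (‖y - z‖² - ‖x⁺ - z‖²) / (2t)` for one step follows from
the decrease condition, the gradient inequality of `φ` and the subgradient inequality of `ψ`.
Applied at `z = (1 - θₖ) xₖ + θₖ x̄` for a minimiser `x̄`, and written with
`uₖ₊₁ = xₖ + θₖ⁻¹ (xₖ₊₁ - xₖ)`, it makes `tₖ θₖ⁻² (f xₖ₊₁ - f̄) + ‖uₖ₊₁ - x̄‖² / 2` non-increasing,
because `θₖ² (1 - θₖ₊₁) ≤ θₖ₊₁²` and `tₖ₊₁ ≤ tₖ`; its initial value is at most `‖x₀ - x̄‖² / 2`.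
Taking the infimum over `x̄ ∈ X̄` gives the first bound, and `tₖ ≥ 1/L` the second.
-/

open scoped RealInnerProductSpace

variable {E : Type*} [NormedAddCommGroup E] [InnerProductSpace ℝ E] [FiniteDimensional ℝ E]

open Set

theorem fista_gap_le {t θ δ r : ℕ → ℝ} {R : ℝ} (ht : ∀ k, 0 < t k)
    (htmono : ∀ k, t (k+1) ≤ t k) (hθmem : ∀ k, θ k ∈ Ioc (0:ℝ) 1)
    (hθrec : ∀ k, (θ k)^2 * (1 - θ (k+1)) ≤ (θ (k+1))^2) (hδ : ∀ k, 0 ≤ δ k) (hr : ∀ k, 0 ≤ r k)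
    (h0 : t 0 / θ 0 ^ 2 * δ 0 + r 0 ≤ R)
    (hstep : ∀ k, δ (k+1) ≤ (1 - θ (k+1)) * δ k + θ (k+1) ^ 2 * (r k - r (k+1)) / t (k+1))
    (k : ℕ) : δ k ≤ θ k ^ 2 * R / t k := by
  have hθ : ∀ k, 0 < θ k := fun k => (hθmem k).1
  have hweight : ∀ k, t (k+1) * (1 - θ (k+1)) / θ (k+1) ^ 2 ≤ t k / θ k ^ 2 := by
    intro k
    have h1 : 0 ≤ 1 - θ (k+1) := sub_nonneg.2 (hθmem (k+1)).2
    rw [div_le_div_iff₀ (pow_pos (hθ _) 2) (pow_pos (hθ _) 2)]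
    calc t (k+1) * (1 - θ (k+1)) * θ k ^ 2 ≤ t k * (θ k ^ 2 * (1 - θ (k+1))) := by
          linarith [mul_le_mul_of_nonneg_right (htmono k) (mul_nonneg h1 (sq_nonneg (θ k)))]
      _ ≤ t k * θ (k+1) ^ 2 := mul_le_mul_of_nonneg_left (hθrec k) (ht k).le
  have hanti : Antitone fun k => t k / θ k ^ 2 * δ k + r k := by
    refine antitone_nat_of_succ_le fun k => ?_
    calc t (k+1) / θ (k+1) ^ 2 * δ (k+1) + r (k+1)
        ≤ t (k+1) / θ (k+1) ^ 2 * ((1 - θ (k+1)) * δ k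
            + θ (k+1) ^ 2 * (r k - r (k+1)) / t (k+1)) + r (k+1) :=
          add_le_add_left (mul_le_mul_of_nonneg_left (hstep k)
            (div_pos (ht _) (pow_pos (hθ _) 2)).le) _
      _ = t (k+1) * (1 - θ (k+1)) / θ (k+1) ^ 2 * δ k + r k := by
          field_simp [(ht (k+1)).ne', (hθ (k+1)).ne']; ring
      _ ≤ t k / θ k ^ 2 * δ k + r k :=
          add_le_add_left (mul_le_mul_of_nonneg_right (hweight k) (hδ k)) _
  have hk : t k / θ k ^ 2 * δ k ≤ R := by linarith [hanti (Nat.zero_le k), hr k]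
  rwa [div_mul_eq_mul_div, div_le_iff₀ (pow_pos (hθ k) 2), ← le_div_iff₀' (ht k), mul_comm R] at hk

theorem le_comp_infDist {α β : Type*} [PseudoMetricSpace α] [LinearOrder β] [TopologicalSpace β]
    [OrderTopology β] {s : Set α} {x : α} {a : β} {g : ℝ → β} (hs : s.Nonempty)
    (hg : ContinuousAt g (Metric.infDist x s)) (hgm : MonotoneOn g (Ici 0))
    (h : ∀ z ∈ s, a ≤ g (dist x z)) : a ≤ g (Metric.infDist x s) := by
  by_contra! hlt
  obtain ⟨ρ, hρa, hρ⟩ : ∃ ρ, g ρ < a ∧ Metric.infDist x s < ρ :=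
    ((hg.eventually (Iio_mem_nhds hlt)).filter_mono nhdsWithin_le_nhds
      |>.and (self_mem_nhdsWithin : Ioi _ ∈ nhdsWithin _ (Ioi _))).exists
  obtain ⟨z, hz, hzρ⟩ := (Metric.infDist_lt_iff hs).1 hρ
  have : g (dist x z) ≤ g ρ :=
    hgm dist_nonneg (Metric.infDist_nonneg.trans hρ.le) hzρ.le
  exact (h z hz).not_gt (this.trans_lt hρa)

section
variable {H : Type*} [NormedAddCommGroup H] [InnerProductSpace ℝ H]

theorem sub_lineMap_eq_smul {θ : ℝ} (hθ : θ ≠ 0) (x x' w : H) :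
    x' - ((1 - θ) • x + θ • w) = θ • (x + θ⁻¹ • (x' - x) - w) := by
  simp only [smul_sub, smul_add, smul_smul, mul_inv_cancel₀ hθ, one_smul]
  module

theorem momentum_sub_lineMap_eq_smul {θ θ' : ℝ} (hθ : θ ≠ 0) (x x' w : H) :
    x' + (θ' * (1 - θ) / θ) • (x' - x) - ((1 - θ') • x' + θ' • w)
      = θ' • (x + θ⁻¹ • (x' - x) - w) := by
  have hcoef : θ' * (1 - θ) / θ = θ' * θ⁻¹ - θ' := by field_simp
  rw [hcoef]
  module

theorem EConvex.coe_add {φ : H → ℝ} {ψ : H → EReal} (hψ : EConvex ψ) (hφ : ConvexOn ℝ univ φ) :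
    EConvex fun v => (φ v : EReal) + ψ v := by
  intro x y a b ha hb hab
  have hφab : φ (a • x + b • y) ≤ a * φ x + b * φ y := by
    simpa using hφ.2 (mem_univ x) (mem_univ y) ha hb hab
  calc (φ (a • x + b • y) : EReal) + ψ (a • x + b • y)
      ≤ ((a * φ x + b * φ y : ℝ) : EReal) + (a * ψ x + b * ψ y) :=
        add_le_add (EReal.coe_le_coe_iff.2 hφab) (hψ x y a b ha hb hab)
    _ = a * (φ x + ψ x) + b * (φ y + ψ y) := by
        rw [EReal.left_distrib_of_nonneg_of_ne_top (EReal.coe_nonneg.2 ha) (EReal.coe_ne_top a),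
          EReal.left_distrib_of_nonneg_of_ne_top (EReal.coe_nonneg.2 hb) (EReal.coe_ne_top b),
          EReal.coe_add, EReal.coe_mul, EReal.coe_mul, add_add_add_comm]

theorem fista_le_of_threePoint {f : H → EReal} (hfc : EConvex f) {w : H} {fbar : ℝ}
    (hw : f w = fbar) (hmin : ∀ v, (fbar : EReal) ≤ f v) {t θ : ℕ → ℝ} (ht : ∀ k, 0 < t k)
    (htmono : ∀ k, t (k+1) ≤ t k) (hθ0 : θ 0 = 1) (hθmem : ∀ k, θ k ∈ Ioc (0:ℝ) 1)
    (hθrec : ∀ k, (θ k)^2 * (1 - θ (k+1)) ≤ (θ (k+1))^2) {x y : ℕ → H} (hy0 : y 0 = x 0)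
    (hy : ∀ k, y (k+1) = x (k+1) + ((θ (k+1) * (1 - θ k)) / θ k) • (x (k+1) - x k))
    (hstep : ∀ k z, f (x (k+1)) ≤
      f z + (((‖y k - z‖ ^ 2 - ‖x (k+1) - z‖ ^ 2) / (2 * t k) : ℝ) : EReal))
    (k : ℕ) : f (x (k+1)) ≤ ((fbar + θ k ^ 2 * dist (x 0) w ^ 2 / (2 * t k) : ℝ) : EReal) := by
  have hθ : ∀ k, θ k ≠ 0 := fun k => (hθmem k).1.ne'
  have hfin : ∀ k, f (x (k+1)) = ((f (x (k+1))).toReal : EReal) := by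
    intro k
    refine (EReal.coe_toReal (ne_top_of_le_ne_top ?_ (hstep k w)) ?_).symm
    · rw [hw, ← EReal.coe_add]; exact EReal.coe_ne_top _
    · exact ne_bot_of_le_ne_bot (EReal.coe_ne_bot fbar) (hmin _)
  set F : ℕ → ℝ := fun k => (f (x (k+1))).toReal
  -- `v k` is `uₖ₊₁`
  set v : ℕ → H := fun k => x k + (θ k)⁻¹ • (x (k+1) - x k)
  have hxv k : x (k+1) - ((1 - θ k) • x k + θ k • w) = θ k • (v k - w) :=
    sub_lineMap_eq_smul (hθ k) _ _ _
  have hyv k : y (k+1) - ((1 - θ (k+1)) • x (k+1) + θ (k+1) • w) = θ (k+1) • (v k - w) := by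
    rw [hy]; exact momentum_sub_lineMap_eq_smul (hθ k) _ _ _
  have hrec : ∀ k, F (k+1) - fbar ≤ (1 - θ (k+1)) * (F k - fbar)
      + θ (k+1) ^ 2 * (‖v k - w‖ ^ 2 / 2 - ‖v (k+1) - w‖ ^ 2 / 2) / t (k+1) := by
    intro k
    have hz : f ((1 - θ (k+1)) • x (k+1) + θ (k+1) • w)
        ≤ (((1 - θ (k+1)) * F k + θ (k+1) * fbar : ℝ) : EReal) := by
      have := hfc (x (k+1)) w (1 - θ (k+1)) (θ (k+1)) (sub_nonneg.2 (hθmem _).2)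
        (hθmem _).1.le (by ring)
      rwa [hfin k, hw, ← EReal.coe_mul, ← EReal.coe_mul, ← EReal.coe_add] at this
    have := (hstep (k+1) _).trans (add_le_add_left hz _)
    rw [hyv, hxv, hfin, ← EReal.coe_add, EReal.coe_le_coe_iff, norm_smul, norm_smul, mul_pow,
      mul_pow, Real.norm_eq_abs, sq_abs] at this
    have e : (θ (k+1) ^ 2 * ‖v k - w‖ ^ 2 - θ (k+1) ^ 2 * ‖v (k+1) - w‖ ^ 2) / (2 * t (k+1))
        = θ (k+1) ^ 2 * (‖v k - w‖ ^ 2 / 2 - ‖v (k+1) - w‖ ^ 2 / 2) / t (k+1) := by ring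
    linarith
  have h0 : t 0 / θ 0 ^ 2 * (F 0 - fbar) + ‖v 0 - w‖ ^ 2 / 2 ≤ ‖x 0 - w‖ ^ 2 / 2 := by
    have h : F 0 - fbar ≤ (‖x 0 - w‖ ^ 2 - ‖x 1 - w‖ ^ 2) / (2 * t 0) := by
      have := hstep 0 w
      rw [hfin, hw, hy0, ← EReal.coe_add, EReal.coe_le_coe_iff] at this
      linarith
    have hv0 : v 0 = x 1 := by simp [v, hθ0]
    rw [le_div_iff₀ (mul_pos two_pos (ht 0))] at h
    rw [hθ0, hv0, one_pow, div_one]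
    linarith
  have := fista_gap_le (δ := fun k => F k - fbar) (r := fun k => ‖v k - w‖ ^ 2 / 2) ht htmono
    hθmem hθrec (fun k => sub_nonneg.2 (EReal.coe_le_coe_iff.1 ((hmin _).trans_eq (hfin k))))
    (fun k => by positivity) h0 hrec k
  rw [hfin k, EReal.coe_le_coe_iff, dist_eq_norm]
  have e : θ k ^ 2 * (‖x 0 - w‖ ^ 2 / 2) / t k = θ k ^ 2 * ‖x 0 - w‖ ^ 2 / (2 * t k) := by ring
  linarith

variable [CompleteSpace H]

theorem ConvexOn.add_inner_gradient_le_s14 {φ : H → ℝ} {G x : H} (hφ : ConvexOn ℝ univ φ)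
    (hG : HasGradientAt φ G x) (z : H) : φ x + ⟪G, z - x⟫ ≤ φ z := by
  set ℓ : ℝ →ᵃ[ℝ] H := AffineMap.lineMap x z
  have hconv : ConvexOn ℝ univ (φ ∘ ℓ) := by simpa using hφ.comp_affineMap ℓ
  have hφℓ : HasFDerivAt φ (InnerProductSpace.toDual ℝ H G) (ℓ 0) := by
    simpa [ℓ] using hG.hasFDerivAt
  have hderiv : HasDerivAt (φ ∘ ℓ) ⟪G, z - x⟫ 0 := by
    simpa using hφℓ.comp_hasDerivAt (0 : ℝ) AffineMap.hasDerivAt_lineMap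
  have := hconv.le_slope_of_hasDerivAt (mem_univ 0) (mem_univ 1) zero_lt_one hderiv
  simp only [slope_def_field, Function.comp_apply, AffineMap.lineMap_apply_one,
    AffineMap.lineMap_apply_zero, sub_zero, div_one, ℓ] at this
  linarith

theorem le_add_of_sufficientDecrease {φ : H → ℝ} {ψ f : H → EReal}
    (hf : ∀ v, f v = φ v + ψ v) (hφ : ConvexOn ℝ univ φ) {y G gψ x' : H} {t : ℝ} (ht : 0 < t)
    (hG : HasGradientAt φ G y) (hgψ : gψ ∈ SubgradAt ψ x') (hx' : x' = y - t • (G + gψ))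
    (hdec : f x' ≤ ((φ y + ⟪gψ, y - x'⟫ - t / 2 * ‖G + gψ‖ ^ 2 : ℝ) : EReal) + ψ x') (z : H) :
    f x' ≤ f z + (((‖y - z‖ ^ 2 - ‖x' - z‖ ^ 2) / (2 * t) : ℝ) : EReal) := by
  set c := φ y + ⟪gψ, y - x'⟫ - t / 2 * ‖G + gψ‖ ^ 2 with hc
  set r := ⟪gψ, z - x'⟫
  set D := (‖y - z‖ ^ 2 - ‖x' - z‖ ^ 2) / (2 * t) with hD_def
  have hD : D = ⟪G + gψ, y - z⟫ - t / 2 * ‖G + gψ‖ ^ 2 := by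
    rw [hD_def, hx', show y - t • (G + gψ) - z = (y - z) - t • (G + gψ) by abel,
      norm_sub_sq_real (y - z), real_inner_smul_right, norm_smul, Real.norm_of_nonneg ht.le,
      real_inner_comm]
    field_simp
    ring
  have hreal : c - r ≤ φ z + D := by
    have hgrad := hφ.add_inner_gradient_le_s14 hG z
    have : ⟪G + gψ, y - z⟫ = ⟪G, y - z⟫ + (⟪gψ, y - x'⟫ - r) := by
      rw [inner_add_left, ← inner_sub_right]; congr 2; abel
    rw [hD, this, ← neg_sub z y, inner_neg_right, hc]
    linarith
  -- the chain stays in `EReal`, so `ψ z = ⊤` needs no separate case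
  calc f x' ≤ (c : EReal) + ψ x' := hdec
    _ = ((c - r : ℝ) : EReal) + (ψ x' + r) := by
        rw [add_left_comm, ← EReal.coe_add, sub_add_cancel, add_comm]
    _ ≤ ((c - r : ℝ) : EReal) + ψ z := add_le_add_right (hgψ z) _
    _ ≤ ((φ z + D : ℝ) : EReal) + ψ z := add_le_add_left (EReal.coe_le_coe_iff.2 hreal) _
    _ = f z + D := by rw [hf, EReal.coe_add, add_right_comm]

end

theorem thm2_rate_general (φ : E → ℝ) (φ' : E → E)
    (hφd : ∀ v, HasGradientAt φ (φ' v) v) (hφc : ConvexOn ℝ Set.univ φ)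
    (ψ : E → EReal) (hψc : EConvex ψ)
    (f : E → EReal) (hf : ∀ v, f v = ((φ v : ℝ) : EReal) + ψ v)
    (fbar : ℝ) (Xbar : Set E) (hXbar : Xbar = {v : E | f v = ((fbar : ℝ) : EReal)})
    (hne : Xbar.Nonempty) (hmin : ∀ v : E, ((fbar : ℝ) : EReal) ≤ f v)
    (L : ℝ) (hL : 0 < L)
    (t : ℕ → ℝ) (ht : ∀ k, 0 < t k) (htmono : ∀ k, t (k+1) ≤ t k)
    (htL : ∀ k, 1/L ≤ t k)
    (θ : ℕ → ℝ) (hθ0 : θ 0 = 1) (hθmem : ∀ k, θ k ∈ Set.Ioc (0:ℝ) 1)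
    (hθrec : ∀ k, (θ k)^2 * (1 - θ (k+1)) ≤ (θ (k+1))^2)
    (x y g gψ : ℕ → E) (hy0 : y 0 = x 0)
    (hgψ : ∀ k, gψ k ∈ SubgradAt ψ (x (k+1)))
    (hg : ∀ k, g k = φ' (y k) + gψ k)
    (hx : ∀ k, x (k+1) = y k - t k • g k)
    (hy : ∀ k, y (k+1) = x (k+1) + ((θ (k+1) * (1 - θ k)) / θ k) • (x (k+1) - x k))
    (hdec : ∀ k, f (x (k+1)) ≤
      ((φ (y k) + ⟪gψ k, y k - x (k+1)⟫ - t k / 2 * ‖g k‖^2 : ℝ) : EReal) + ψ (x (k+1))) :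
    ∀ k : ℕ, 1 ≤ k →
      f (x k) ≤
        ((fbar + (θ (k-1))^2 * (Metric.infDist (x 0) Xbar)^2 / (2 * t (k-1)) : ℝ) : EReal) ∧
      (θ (k-1))^2 * (Metric.infDist (x 0) Xbar)^2 / (2 * t (k-1)) ≤
        L * (θ (k-1))^2 * (Metric.infDist (x 0) Xbar)^2 / 2 := by
  have hstep k := le_add_of_sufficientDecrease hf hφc (ht k) (hφd (y k)) (hgψ k)
    (hg k ▸ hx k) (hg k ▸ hdec k)
  have hfc : EConvex f := funext hf ▸ hψc.coe_add hφc
  intro k hk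
  obtain ⟨j, rfl⟩ : ∃ j, k = j + 1 := ⟨k - 1, by omega⟩
  rw [Nat.add_sub_cancel]
  have hrate : ∀ w ∈ Xbar,
      f (x (j+1)) ≤ ((fbar + θ j ^ 2 * dist (x 0) w ^ 2 / (2 * t j) : ℝ) : EReal) := by
    intro w hw
    rw [hXbar] at hw
    exact fista_le_of_threePoint hfc hw hmin ht htmono hθ0 hθmem hθrec hy0 hy hstep j
  refine ⟨le_comp_infDist (g := fun d => ((fbar + θ j ^ 2 * d ^ 2 / (2 * t j) : ℝ) : EReal))
    hne ?_ ?_ hrate, ?_⟩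
  · exact (continuous_coe_real_ereal.comp (by fun_prop)).continuousAt
  · intro a _ b _ hab
    exact EReal.coe_le_coe_iff.2 (by have := ht j; gcongr)
  · calc θ j ^ 2 * Metric.infDist (x 0) Xbar ^ 2 / (2 * t j)
        = θ j ^ 2 * Metric.infDist (x 0) Xbar ^ 2 / 2 * (1 / t j) := by ring
      _ ≤ θ j ^ 2 * Metric.infDist (x 0) Xbar ^ 2 / 2 * L :=
        mul_le_mul_of_nonneg_left ((one_div_le (ht j) hL).2 (htL j)) (by positivity)
      _ = L * θ j ^ 2 * Metric.infDist (x 0) Xbar ^ 2 / 2 := by ring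

/-- Theorem 2 consequence: FISTA-with-backtracking rate. -/
theorem thm2_rate (φ : E → ℝ) (φ' : E → E)
    (hφd : ∀ v, HasGradientAt φ (φ' v) v) (hφc : ConvexOn ℝ Set.univ φ)
    (ψ : E → EReal) (hψc : EConvex ψ) (hψp : ProperFn ψ) (hψlsc : LowerSemicontinuous ψ)
    (f : E → EReal) (hf : ∀ v, f v = ((φ v : ℝ) : EReal) + ψ v)
    (fbar : ℝ) (Xbar : Set E) (hXbar : Xbar = {v : E | f v = ((fbar : ℝ) : EReal)})
    (hne : Xbar.Nonempty) (hmin : ∀ v : E, ((fbar : ℝ) : EReal) ≤ f v)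
    (L : ℝ) (hL : 0 < L)
    (t : ℕ → ℝ) (ht : ∀ k, 0 < t k) (htmono : ∀ k, t (k+1) ≤ t k)
    (htL : ∀ k, 1/L ≤ t k)
    (θ : ℕ → ℝ) (hθ0 : θ 0 = 1) (hθmem : ∀ k, θ k ∈ Set.Ioc (0:ℝ) 1)
    (hθrec : ∀ k, (θ k)^2 * (1 - θ (k+1)) ≤ (θ (k+1))^2)
    (x y g gψ : ℕ → E) (hy0 : y 0 = x 0)
    (hgψ : ∀ k, gψ k ∈ SubgradAt ψ (x (k+1)))
    (hg : ∀ k, g k = φ' (y k) + gψ k)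
    (hx : ∀ k, x (k+1) = y k - t k • g k)
    (hy : ∀ k, y (k+1) = x (k+1) + ((θ (k+1) * (1 - θ k)) / θ k) • (x (k+1) - x k))
    (hdec : ∀ k, f (x (k+1)) ≤
      ((φ (y k) + ⟪gψ k, y k - x (k+1)⟫ - t k / 2 * ‖g k‖^2 : ℝ) : EReal) + ψ (x (k+1))) :
    ∀ k : ℕ, 1 ≤ k →
      f (x k) ≤
        ((fbar + (θ (k-1))^2 * (Metric.infDist (x 0) Xbar)^2 / (2 * t (k-1)) : ℝ) : EReal) ∧
      (θ (k-1))^2 * (Metric.infDist (x 0) Xbar)^2 / (2 * t (k-1)) ≤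
        L * (θ (k-1))^2 * (Metric.infDist (x 0) Xbar)^2 / 2 :=
  thm2_rate_general φ φ' hφd hφc ψ hψc f hf fbar Xbar hXbar hne hmin L hL t ht htmono htL θ hθ0
    hθmem hθrec x y g gψ hy0 hgψ hg hx hy hdec
end

section
/- Proximal subgradient bound (Proposition 1): Let φ : ℝⁿ → ℝ be convex, ψ : ℝⁿ → ℝ ∪ {∞} proper closed convex, f = φ+ψ. Define x_{k+1} = Prox_{t_k}(x_k − t_k g_k^φ) with g_k^φ ∈ ∂φ(x_k), t_k > 0; equivalently x_{k+1} = x_k − t_k g_k with g_k = g_k^φ + g_k^ψ, g_k^ψ ∈ ∂ψ(x_{k+1}). Let z_k = (∑_{i=0}^{k} t_i g_i)/(∑_{i=0}^{k} t_i). Then for all k ≥ 0, (∑_{i=0}^{k} t_i(φ(x_i)+ψ(x_{i+1})) − ½∑_{i=0}^{k} t_i²‖g_i^φ‖²)/(∑_{i=0}^{k} t_i) ≤ −f*(z_k) + ⟨z_k, x₀⟩ − (∑_{i=0}^{k} t_i)/2·‖z_k‖². -/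
/-!
Each step gives, for every `y` in the domain of `ψ`, the subgradient inequalities
`φ(xᵢ) ≤ φ(y) + ⟪gᵢ^φ, xᵢ - y⟫` and `ψ(xᵢ₊₁) ≤ ψ(y) + ⟪gᵢ^ψ, xᵢ₊₁ - y⟫`; adding them with weight `tᵢ`
and using `⟪gᵢ^φ, gᵢ⟫ ≤ (‖gᵢ^φ‖² + ‖gᵢ‖²)/2` yields
`tᵢ (φ(xᵢ) + ψ(xᵢ₊₁)) - tᵢ²‖gᵢ^φ‖²/2 ≤ tᵢ f(y) + (‖xᵢ - y‖² - ‖xᵢ₊₁ - y‖²)/2`.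
The right-hand side telescopes to `T f(y) + ⟪S, x₀ - y⟫ - ‖S‖²/2` with `T = ∑ tᵢ` and `S = T z_k`.
Dividing by `T` bounds `⟪z_k, y⟫ - f(y)` uniformly in `y`, hence bounds `f*(z_k)`.
-/

open scoped RealInnerProductSpace

variable {E : Type*} [NormedAddCommGroup E] [InnerProductSpace ℝ E] [FiniteDimensional ℝ E]

open Finset

section

variable {F : Type*} [NormedAddCommGroup F] [InnerProductSpace ℝ F]

lemma EReal.coe_finset_sum {ι : Type*} (s : Finset ι) (f : ι → ℝ) :
    ((∑ i ∈ s, f i : ℝ) : EReal) = ∑ i ∈ s, (f i : EReal) :=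
  map_sum (⟨⟨Real.toEReal, EReal.coe_zero⟩, EReal.coe_add⟩ : ℝ →+ EReal) f s

lemma EReal.coe_le_neg_add_coe_of_le {a c : ℝ} {e : EReal} (h : e ≤ (c - a : ℝ)) :
    (a : EReal) ≤ -e + c :=
  calc (a : EReal) = -((c - a : ℝ) : EReal) + c := by
        rw [← EReal.coe_neg, ← EReal.coe_add]; congr 1; ring
    _ ≤ -e + c := add_le_add_left (EReal.neg_le_neg_iff.mpr h) _

lemma ProperFn.ne_top_of_mem_subgradAt {ψ : F → EReal} (hψ : ProperFn ψ) {x g : F}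
    (hg : g ∈ SubgradAt ψ x) : ψ x ≠ ⊤ := by
  obtain ⟨⟨y, hy⟩, -⟩ := hψ
  intro hx
  have := hg y
  rw [hx, EReal.top_add_coe, top_le_iff] at this
  exact hy this

lemma conjFn_le_of_forall_le {f : F → EReal} {z : F} {c : ℝ}
    (h : ∀ y, ((⟪z, y⟫ - c : ℝ) : EReal) ≤ f y) : conjFn f z ≤ c := by
  refine iSup_le fun y => ?_
  have hy := h y
  rw [EReal.coe_sub, EReal.sub_le_iff_le_add (.inl (EReal.coe_ne_bot c))
    (.inl (EReal.coe_ne_top c))] at hy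
  rwa [EReal.sub_le_iff_le_add (.inr (EReal.coe_ne_top c)) (.inr (EReal.coe_ne_bot c)),
    add_comm]

lemma inner_sub_half_norm_sq_eq (u v : F) :
    ⟪v, u⟫ - ‖v‖ ^ 2 / 2 = (‖u‖ ^ 2 - ‖u - v‖ ^ 2) / 2 := by
  rw [norm_sub_sq_real, real_inner_comm]; ring

lemma sum_range_inner_sub_half_norm_sq {x s : ℕ → F} (hx : ∀ i, x (i + 1) = x i - s i)
    (y : F) (n : ℕ) :
    ∑ i ∈ range n, (⟪s i, x i - y⟫ - ‖s i‖ ^ 2 / 2)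
      = ⟪∑ i ∈ range n, s i, x 0 - y⟫ - ‖∑ i ∈ range n, s i‖ ^ 2 / 2 := by
  have hstep : ∀ i, x i - y - s i = x (i + 1) - y := fun i => by rw [hx]; abel
  have hxn : x n - y = x 0 - y - ∑ i ∈ range n, s i := by
    have hs : ∀ i, s i = x i - x (i + 1) := fun i => by rw [hx, sub_sub_cancel]
    rw [sum_congr rfl fun i _ => hs i, sum_range_sub']; abel
  simp only [inner_sub_half_norm_sq_eq, hstep]
  rw [← sum_div, sum_range_sub' (fun i => ‖x i - y‖ ^ 2), hxn]

lemma prox_grad_step_le {φ : F → ℝ} {ψ : F → EReal} {x x' g gφ gψ y : F} {t a b : ℝ}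
    (ht : 0 ≤ t) (hgφ : gφ ∈ RSubgradAt φ x) (hgψ : gψ ∈ SubgradAt ψ x')
    (hg : g = gφ + gψ) (hx' : x' = x - t • g) (ha : ψ x' = a) (hb : ψ y = b) :
    t * (φ x + a) - t ^ 2 * ‖gφ‖ ^ 2 / 2
      ≤ t * (φ y + b) + (⟪t • g, x - y⟫ - ‖t • g‖ ^ 2 / 2) := by
  have hφ : φ x + ⟪gφ, y - x⟫ ≤ φ y := hgφ y
  have hψ : a + ⟪gψ, y - x'⟫ ≤ b := by
    have := hgψ y
    rwa [ha, hb, ← EReal.coe_add, EReal.coe_le_coe_iff] at this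
  have young : 0 ≤ ‖gφ - g‖ ^ 2 := sq_nonneg _
  have hy : y - x' = (y - x) + t • g := by rw [hx']; abel
  rw [hy, hg] at hψ
  rw [norm_sub_sq_real, hg] at young
  rw [hg]
  simp only [inner_add_left, inner_add_right, real_inner_smul_left, real_inner_smul_right,
    norm_smul, mul_pow, Real.norm_eq_abs, sq_abs, norm_add_sq_real, inner_sub_right,
    real_inner_self_eq_norm_sq] at hφ hψ young ⊢
  nlinarith [mul_le_mul_of_nonneg_left hφ ht, mul_le_mul_of_nonneg_left hψ ht,
    mul_nonneg (sq_nonneg t) young, real_inner_comm gφ gψ]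

lemma sum_prox_grad_steps_le {φ : F → ℝ} {ψ : F → EReal} {t s : ℕ → ℝ} {x g gφ gψ : ℕ → F}
    (ht : ∀ i, 0 ≤ t i) (hgφ : ∀ i, gφ i ∈ RSubgradAt φ (x i))
    (hgψ : ∀ i, gψ i ∈ SubgradAt ψ (x (i + 1))) (hg : ∀ i, g i = gφ i + gψ i)
    (hx : ∀ i, x (i + 1) = x i - t i • g i) (hs : ∀ i, ψ (x (i + 1)) = s i)
    (n : ℕ) {y : F} {b : ℝ} (hb : ψ y = b) :
    ∑ i ∈ range n, t i * (φ (x i) + s i) - 1 / 2 * ∑ i ∈ range n, t i ^ 2 * ‖gφ i‖ ^ 2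
      ≤ (∑ i ∈ range n, t i) * (φ y + b) + (⟪∑ i ∈ range n, t i • g i, x 0 - y⟫
          - ‖∑ i ∈ range n, t i • g i‖ ^ 2 / 2) := by
  rw [← sum_range_inner_sub_half_norm_sq hx, sum_mul, ← sum_add_distrib, mul_sum,
    ← sum_sub_distrib]
  refine sum_le_sum fun i _ => ?_
  have := prox_grad_step_le (ht i) (hgφ i) (hgψ i) (hg i) (hx i) (hs i) hb
  linarith

end

theorem prox_subgrad_bound_general (φ : E → ℝ)
    (ψ : E → EReal) (hψp : ProperFn ψ)
    (f : E → EReal) (hf : ∀ v, f v = ((φ v : ℝ) : EReal) + ψ v)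
    (t : ℕ → ℝ) (ht : ∀ k, 0 < t k)
    (x g gφ gψ : ℕ → E)
    (hgφ : ∀ k, gφ k ∈ RSubgradAt φ (x k))
    (hgψ : ∀ k, gψ k ∈ SubgradAt ψ (x (k+1)))
    (hg : ∀ k, g k = gφ k + gψ k)
    (hx : ∀ k, x (k+1) = x k - t k • g k)
    (z : ℕ → E)
    (hz : ∀ k, z k = (∑ i ∈ Finset.range (k+1), t i)⁻¹ •
      ∑ i ∈ Finset.range (k+1), t i • g i) :
    ∀ k : ℕ,
      ((∑ i ∈ Finset.range (k+1), (((t i : ℝ) : EReal) *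
            (((φ (x i) : ℝ) : EReal) + ψ (x (i+1))))) -
          ((1/2 * ∑ i ∈ Finset.range (k+1), (t i)^2 * ‖gφ i‖^2 : ℝ) : EReal)) /
          (((∑ i ∈ Finset.range (k+1), t i : ℝ)) : EReal)
        ≤ -(conjFn f (z k)) +
            ((⟪z k, x 0⟫ - (∑ i ∈ Finset.range (k+1), t i) / 2 * ‖z k‖^2 : ℝ) : EReal) := by
  intro k
  set T := ∑ i ∈ range (k + 1), t i
  have hT : 0 < T := sum_pos (fun i _ => ht i) nonempty_range_add_one
  set s : ℕ → ℝ := fun i => (ψ (x (i + 1))).toReal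
  have hs : ∀ i, ψ (x (i + 1)) = s i := fun i =>
    (EReal.coe_toReal (hψp.ne_top_of_mem_subgradAt (hgψ i)) (hψp.2 _)).symm
  set A := ∑ i ∈ range (k + 1), t i * (φ (x i) + s i)
    - 1 / 2 * ∑ i ∈ range (k + 1), t i ^ 2 * ‖gφ i‖ ^ 2
  have hS : ∑ i ∈ range (k + 1), t i • g i = T • z k := by rw [hz, smul_inv_smul₀ hT.ne']
  have hconj : conjFn f (z k) ≤ ((⟪z k, x 0⟫ - T / 2 * ‖z k‖ ^ 2 - A / T : ℝ) : EReal) := by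
    refine conjFn_le_of_forall_le fun y => ?_
    rw [hf y]
    induction hψy : ψ y using EReal.rec with
    | bot => exact absurd hψy (hψp.2 y)
    | top => simp
    | coe b =>
      have key := sum_prox_grad_steps_le (fun i => (ht i).le) hgφ hgψ hg hx hs (k + 1) hψy
      rw [hS, real_inner_smul_left, norm_smul, Real.norm_of_nonneg hT.le, inner_sub_right] at key
      have hAT : A / T ≤ φ y + b + (⟪z k, x 0⟫ - ⟪z k, y⟫) - T / 2 * ‖z k‖ ^ 2 := by
        rw [div_le_iff₀ hT]; linear_combination key
      rw [← EReal.coe_add, EReal.coe_le_coe_iff]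
      linarith
  convert EReal.coe_le_neg_add_coe_of_le hconj using 1
  simp only [hs, ← EReal.coe_add, ← EReal.coe_mul, ← EReal.coe_finset_sum, ← EReal.coe_sub,
    ← EReal.coe_div]
  rfl

/-- Proposition 1: conjugate-based bound for the proximal subgradient method. -/
theorem prox_subgrad_bound (φ : E → ℝ) (hφc : ConvexOn ℝ Set.univ φ)
    (ψ : E → EReal) (hψc : EConvex ψ) (hψp : ProperFn ψ) (hψlsc : LowerSemicontinuous ψ)
    (f : E → EReal) (hf : ∀ v, f v = ((φ v : ℝ) : EReal) + ψ v)
    (t : ℕ → ℝ) (ht : ∀ k, 0 < t k)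
    (x g gφ gψ : ℕ → E)
    (hgφ : ∀ k, gφ k ∈ RSubgradAt φ (x k))
    (hprox : ∀ k, IsProxPt ψ (t k) (x k - t k • gφ k) (x (k+1)))
    (hgψ : ∀ k, gψ k ∈ SubgradAt ψ (x (k+1)))
    (hg : ∀ k, g k = gφ k + gψ k)
    (hx : ∀ k, x (k+1) = x k - t k • g k)
    (z : ℕ → E)
    (hz : ∀ k, z k = (∑ i ∈ Finset.range (k+1), t i)⁻¹ •
      ∑ i ∈ Finset.range (k+1), t i • g i) :
    ∀ k : ℕ,
      ((∑ i ∈ Finset.range (k+1), (((t i : ℝ) : EReal) *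
            (((φ (x i) : ℝ) : EReal) + ψ (x (i+1))))) -
          ((1/2 * ∑ i ∈ Finset.range (k+1), (t i)^2 * ‖gφ i‖^2 : ℝ) : EReal)) /
          (((∑ i ∈ Finset.range (k+1), t i : ℝ)) : EReal)
        ≤ -(conjFn f (z k)) +
            ((⟪z k, x 0⟫ - (∑ i ∈ Finset.range (k+1), t i) / 2 * ‖z k‖^2 : ℝ) : EReal) :=
  prox_subgrad_bound_general φ ψ hψp f hf t ht x g gφ gψ hgφ hgψ hg hx z hz
end
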